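/- If (1/T) sum_{t=1}^T X_t X_t' converges to a positive definite matrix Sigma, then X_T' (sum_{t=1}^T X_t X_t')^{-1} X_T -> 0. In particular ||X_T||^2/T -> 0. -/

import Mathlib

open Filter Finset Topology

/-! Since `G_T / T → Σ` for the Gram matrices `G_T = ∑_{t ≤ T} X_t X_t'`, the increments
`X_T X_T' / T` tend to `0`; taking traces gives `‖X_T‖² / T → 0`. Moreover
`X_T' G_T⁻¹ X_T = tr ((G_T / T)⁻¹ (X_T X_T' / T))`, and matrix inversion is continuous at the
invertible `Σ`, so the quadratic form tends to `tr (Σ⁻¹ 0) = 0`. -/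

namespace Matrix

variable {n : Type*} [Fintype n]

/-- Also for singular `A`, where both sides are the junk value `0`. -/
theorem inv_smul_of_ne_zero [DecidableEq n] {K : Type*} [Field K] {c : K} (hc : c ≠ 0)
    (A : Matrix n n K) : (c • A)⁻¹ = c⁻¹ • A⁻¹ := by
  by_cases hA : IsUnit A.det
  · exact inv_smul' (A := A) (Units.mk0 c hc) hA
  · have hcA : ¬IsUnit (c • A).det := by
      simp_all [isUnit_iff_ne_zero]
    rw [nonsing_inv_apply_not_isUnit _ hA, nonsing_inv_apply_not_isUnit _ hcA, smul_zero]

theorem dotProduct_mulVec_self_eq_trace {R : Type*} [CommSemiring R] (A : Matrix n n R)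
    (x : n → R) : x ⬝ᵥ A *ᵥ x = trace (A * vecMulVec x x) := by
  rw [mul_vecMulVec, trace_vecMulVec, dotProduct_comm]

end Matrix

section Increments

variable {E : Type*} [AddCommGroup E] [Module ℝ E] [TopologicalSpace E]
  [IsTopologicalAddGroup E] [ContinuousSMul ℝ E]

theorem tendsto_inv_smul_sub_of_tendsto_inv_smul {u : ℕ → E} {L : E}
    (h : Tendsto (fun n : ℕ => (n : ℝ)⁻¹ • u n) atTop (𝓝 L)) :
    Tendsto (fun n : ℕ => ((n : ℝ) + 1)⁻¹ • (u (n + 1) - u n)) atTop (𝓝 0) := by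
  have hnext : Tendsto (fun n : ℕ => ((n : ℝ) + 1)⁻¹ • u (n + 1)) atTop (𝓝 L) := by
    simpa using (tendsto_add_atTop_iff_nat 1).2 h
  have hprev : Tendsto (fun n : ℕ => ((n : ℝ) + 1)⁻¹ • u n) atTop (𝓝 L) := by
    have h' := (tendsto_natCast_div_add_atTop (1 : ℝ)).smul h
    rw [one_smul] at h'
    refine h'.congr' ?_
    filter_upwards [eventually_ne_atTop 0] with n hn
    rw [smul_smul]
    field_simp
  simpa [smul_sub] using hnext.sub hprev

theorem tendsto_inv_smul_of_tendsto_inv_smul_sum_Icc {f : ℕ → E} {L : E}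
    (h : Tendsto (fun T : ℕ => (T : ℝ)⁻¹ • ∑ t ∈ Icc 1 T, f t) atTop (𝓝 L)) :
    Tendsto (fun T : ℕ => (T : ℝ)⁻¹ • f T) atTop (𝓝 0) := by
  rw [← tendsto_add_atTop_iff_nat 1]
  simpa [sum_Icc_succ_top] using tendsto_inv_smul_sub_of_tendsto_inv_smul h

end Increments

/-- If the normalized Gram matrices `(1/T) ∑_{t≤T} X_t X_t'` converge to a
positive definite matrix `Σ`, then `X_T' (∑_{t≤T} X_t X_t')⁻¹ X_T → 0`; in particular
`‖X_T‖²/T → 0`. -/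
theorem stmt6 {p : ℕ} (X : ℕ → Fin p → ℝ) (Sig : Matrix (Fin p) (Fin p) ℝ)
    (hSig : Sig.PosDef)
    (hconv : Tendsto (fun T : ℕ =>
        ((T : ℝ))⁻¹ • ∑ t ∈ Finset.Icc 1 T, Matrix.vecMulVec (X t) (X t))
      atTop (𝓝 Sig)) :
    Tendsto (fun T : ℕ =>
        dotProduct (X T)
          ((∑ t ∈ Finset.Icc 1 T, Matrix.vecMulVec (X t) (X t))⁻¹.mulVec (X T)))
      atTop (𝓝 0) ∧
    Tendsto (fun T : ℕ => (∑ i, (X T i) ^ 2) / T) atTop (𝓝 0) := by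
  have hnew : Tendsto (fun T : ℕ => (T : ℝ)⁻¹ • Matrix.vecMulVec (X T) (X T)) atTop (𝓝 0) :=
    tendsto_inv_smul_of_tendsto_inv_smul_sum_Icc hconv
  have hinv := (continuousAt_matrix_inv Sig (by
    simpa [Ring.inverse_eq_inv'] using continuousAt_inv₀ hSig.det_pos.ne')).tendsto.comp hconv
  have htrace : Tendsto Matrix.trace (𝓝 (0 : Matrix (Fin p) (Fin p) ℝ)) (𝓝 0) :=
    continuous_id.matrix_trace.tendsto' 0 0 (Matrix.trace_zero _ _)
  constructor
  · have hprod := hinv.mul hnew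
    rw [mul_zero] at hprod
    refine (htrace.comp hprod).congr' ?_
    filter_upwards [eventually_ne_atTop 0] with T hT
    have hT' : (T : ℝ) ≠ 0 := Nat.cast_ne_zero.2 hT
    rw [Function.comp_apply, Function.comp_apply, Matrix.inv_smul_of_ne_zero (inv_ne_zero hT'),
      inv_inv, smul_mul_smul_comm, mul_inv_cancel₀ hT', one_smul,
      Matrix.dotProduct_mulVec_self_eq_trace]
  · refine (htrace.comp hnew).congr fun T => ?_
    simp [Matrix.trace_vecMulVec, dotProduct, sq, div_eq_inv_mul]
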